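/- Under the same cell-problem setup, the matrix B^{(w)} with entries b_{ij} = ∫_{Y_f} W^{(i)}·e^j dy is positive semidefinite, and for every ξ ∈ ℝ³, ∑_{i,j} b_{ij} ξ_i ξ_j = μ₁ ∫_{Y_f} |D(y, W(ξ))|² dy where W(ξ) = ∑_i ξ_i W^{(i)}. Moreover if ξ ≠ 0 then ∑_{i,j} b_{ij} ξ_i ξ_j > 0, i.e. B^{(w)} is strictly positive definite. -/

import Mathlib

open MeasureTheory Real

noncomputable section

def normSq (v : Fin 3 → ℝ) : ℝ := ∑ i, (v i) ^ 2

def symGrad (w : (Fin 3 → ℝ) → (Fin 3 → ℝ)) (y : Fin 3 → ℝ) (i j : Fin 3) : ℝ :=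
  (fderiv ℝ w y (Pi.single i 1) j + fderiv ℝ w y (Pi.single j 1) i) / 2

def symGradInner (w v : (Fin 3 → ℝ) → (Fin 3 → ℝ)) (y : Fin 3 → ℝ) : ℝ :=
  ∑ i, ∑ j, symGrad w y i j * symGrad v y i j

def symGradNormSq (w : (Fin 3 → ℝ) → (Fin 3 → ℝ)) (y : Fin 3 → ℝ) : ℝ :=
  ∑ i, ∑ j, (symGrad w y i j) ^ 2

def Yf (r : ℝ) : Set (Fin 3 → ℝ) :=
  {y | (∀ i, -(1 / 2 : ℝ) < y i ∧ y i < 1 / 2) ∧ r ^ 2 < normSq y}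

def YPeriodicV (w : (Fin 3 → ℝ) → (Fin 3 → ℝ)) : Prop :=
  ∀ y : Fin 3 → ℝ, ∀ k : Fin 3 → ℤ, w (fun i => y i + (k i : ℝ)) = w y

def divFree (w : (Fin 3 → ℝ) → (Fin 3 → ℝ)) : Prop :=
  ∀ y, ∑ i, fderiv ℝ w y (Pi.single i 1) i = 0

def CellAdmissible (r : ℝ) (φ : (Fin 3 → ℝ) → (Fin 3 → ℝ)) : Prop :=
  ContDiff ℝ 1 φ ∧ YPeriodicV φ ∧ divFree φ ∧ ∀ y, normSq y = r ^ 2 → φ y = 0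

/-!
Testing the cell equation for `W j` with `φ = W i` gives `b i j = μ₁ ∫ D(W i) : D(W j)`, so by
bilinearity the quadratic form of `B` is `μ₁ ∫ |D(W ξ)|²`. If it vanishes then `D(W ξ) = 0` a.e.,
and superposing the cell equations gives `∑ ξ i ∫ φ i = 0` for every admissible `φ`. Taking
`φ y = ψ (y j) • e k` with `j ≠ k` and `ψ a = g (cos 2πr - cos 2πa)`, where `g` is smooth, zero on
`(-∞, 0]` and positive beyond, yields a periodic, divergence-free field vanishing on `|y| = r`
with `∫ φ k > 0`, hence `ξ k = 0`.
-/

lemma sq_apply_le_normSq (y : Fin 3 → ℝ) (j : Fin 3) : y j ^ 2 ≤ normSq y :=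
  Finset.single_le_sum (f := fun i => y i ^ 2) (fun _ _ => sq_nonneg _) (Finset.mem_univ j)

lemma continuous_normSq : Continuous normSq :=
  continuous_finsetSum _ fun i _ => (continuous_apply i).pow 2

lemma isOpen_Yf (r : ℝ) : IsOpen (Yf r) := by
  have : Yf r = (⋂ i, (fun y : Fin 3 → ℝ => y i) ⁻¹' Set.Ioo (-(1 / 2)) (1 / 2)) ∩
      normSq ⁻¹' Set.Ioi (r ^ 2) := by
    ext y
    simp [Yf, forall_and]
  rw [this]
  exact (isOpen_iInter_of_finite fun i => isOpen_Ioo.preimage (continuous_apply i)).inter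
    (isOpen_Ioi.preimage continuous_normSq)

lemma Yf_subset_Icc (r : ℝ) : Yf r ⊆ Set.Icc (fun _ => -(1 / 2)) (fun _ => 1 / 2) :=
  fun _ hy => ⟨fun i => (hy.1 i).1.le, fun i => (hy.1 i).2.le⟩

lemma Continuous.integrableOn_Yf {f : (Fin 3 → ℝ) → ℝ} (hf : Continuous f) (r : ℝ) :
    IntegrableOn f (Yf r) :=
  (hf.continuousOn.integrableOn_compact isCompact_Icc).mono_set (Yf_subset_Icc r)

lemma IsOpen.setIntegral_pos_of_continuous {X : Type*} [TopologicalSpace X] [MeasurableSpace X]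
    [OpensMeasurableSpace X] {μ : Measure X} [μ.IsOpenPosMeasure] {s : Set X} {f : X → ℝ}
    {x : X} (hs : IsOpen s) (hf : Continuous f) (hfs : IntegrableOn f s μ) (hf0 : 0 ≤ f)
    (hx : x ∈ s) (hfx : 0 < f x) : 0 < ∫ x in s, f x ∂μ :=
  (setIntegral_pos_iff_support_of_nonneg_ae (.of_forall hf0) hfs).2 <|
    (hf.isOpen_support.inter hs).measure_pos μ ⟨x, hfx.ne', hx⟩

lemma divFree_single_comp_apply {h : ℝ → ℝ} (hh : Differentiable ℝ h) {j k : Fin 3}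
    (hjk : j ≠ k) : divFree fun y => Pi.single k (h (y j)) := by
  intro y
  have hd := (hasFDerivAt_single (𝕜 := ℝ) (E := fun _ : Fin 3 => ℝ) (i := k) _).comp y
    ((hh (y j)).hasDerivAt.comp_hasFDerivAt y (hasFDerivAt_apply (𝕜 := ℝ) j y))
  simp only [Function.comp_def] at hd
  refine hd.fderiv ▸ Finset.sum_eq_zero fun i _ => ?_
  rcases eq_or_ne i k with rfl | hik
  · simp [Pi.single_apply, hjk]
  · simp [hik]

def cellProfile (r a : ℝ) : ℝ := expNegInvGlue (cos (2 * π * r) - cos (2 * π * a))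

lemma contDiff_cellProfile (r : ℝ) : ContDiff ℝ 1 (cellProfile r) :=
  expNegInvGlue.contDiff.comp
    (contDiff_const.sub (contDiff_cos.comp (contDiff_const.mul contDiff_id)))

lemma cellProfile_add_int (r a : ℝ) (m : ℤ) : cellProfile r (a + m) = cellProfile r a := by
  simp only [cellProfile, mul_add, show 2 * π * m = m * (2 * π) by ring, cos_add_int_mul_two_pi]

lemma cellProfile_eq_zero {r a : ℝ} (hr' : r ≤ 1 / 2) (ha : |a| ≤ r) : cellProfile r a = 0 := by
  refine expNegInvGlue.zero_of_nonpos (sub_nonpos.2 ?_)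
  rw [← cos_abs (2 * π * a), abs_mul, abs_of_pos two_pi_pos]
  exact cos_le_cos_of_nonneg_of_le_pi (by positivity) (by nlinarith [pi_pos])
    (by nlinarith [pi_pos])

lemma cellProfile_pos {r a : ℝ} (hr : 0 ≤ r) (hra : r < a) (ha : a ≤ 1 / 2) :
    0 < cellProfile r a :=
  expNegInvGlue.pos_of_pos <| sub_pos.2 <|
    cos_lt_cos_of_nonneg_of_le_pi (by positivity) (by nlinarith [pi_pos]) (by nlinarith [pi_pos])

lemma cellAdmissible_single_cellProfile {r : ℝ} (hr : 0 ≤ r) (hr' : r ≤ 1 / 2) {j k : Fin 3}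
    (hjk : j ≠ k) : CellAdmissible r fun y => Pi.single k (cellProfile r (y j)) := by
  refine ⟨(contDiff_single (fun _ : Fin 3 => ℝ) 1 k).comp
      ((contDiff_cellProfile r).comp (contDiff_apply ℝ ℝ j)),
    fun y m => by simp only [cellProfile_add_int],
    divFree_single_comp_apply ((contDiff_cellProfile r).differentiable one_ne_zero) hjk,
    fun y hy => ?_⟩
  have : y j ^ 2 ≤ r ^ 2 := hy ▸ sq_apply_le_normSq y j
  simp only [cellProfile_eq_zero hr' (abs_le_of_sq_le_sq this hr), Pi.single_zero]

lemma setIntegral_cellProfile_pos {r : ℝ} (hr : 0 < r) (hr' : r < 1 / 2) (j : Fin 3) :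
    0 < ∫ y in Yf r, cellProfile r (y j) := by
  obtain ⟨t, hrt, ht⟩ := exists_between hr'
  have hcont : Continuous fun y : Fin 3 → ℝ => cellProfile r (y j) :=
    (contDiff_cellProfile r).continuous.comp (continuous_apply j)
  have hmem : (fun _ => t) ∈ Yf r := by
    refine ⟨fun _ => ⟨by linarith, ht⟩, ?_⟩
    simp only [normSq, Finset.sum_const, Finset.card_univ, Fintype.card_fin, nsmul_eq_mul,
      Nat.cast_ofNat]
    nlinarith
  exact (isOpen_Yf r).setIntegral_pos_of_continuous hcont (hcont.integrableOn_Yf r)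
    (fun y => expNegInvGlue.nonneg _) hmem (cellProfile_pos hr.le hrt ht.le)

lemma exists_cellAdmissible_setIntegral_pos {r : ℝ} (hr : 0 < r) (hr' : r < 1 / 2)
    (k : Fin 3) :
    ∃ φ, CellAdmissible r φ ∧ (∀ y, ∀ i ≠ k, φ y i = 0) ∧ 0 < ∫ y in Yf r, φ y k := by
  obtain ⟨j, hjk⟩ := exists_ne k
  refine ⟨_, cellAdmissible_single_cellProfile hr.le hr'.le hjk,
    fun y i hik => Pi.single_eq_of_ne hik _, ?_⟩
  simpa using setIntegral_cellProfile_pos hr hr' j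

lemma continuous_symGrad {w : (Fin 3 → ℝ) → (Fin 3 → ℝ)} (hw : ContDiff ℝ 1 w) (i j : Fin 3) :
    Continuous fun y => symGrad w y i j := by
  have hDw : ∀ (v : Fin 3 → ℝ) (l : Fin 3), Continuous fun y => fderiv ℝ w y v l := fun v l =>
    (continuous_apply l).comp ((hw.continuous_fderiv one_ne_zero).clm_apply continuous_const)
  exact ((hDw _ j).add (hDw _ i)).div_const 2

lemma continuous_symGradInner {w v : (Fin 3 → ℝ) → (Fin 3 → ℝ)} (hw : ContDiff ℝ 1 w)
    (hv : ContDiff ℝ 1 v) : Continuous (symGradInner w v) :=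
  continuous_finsetSum _ fun i _ => continuous_finsetSum _ fun j _ =>
    (continuous_symGrad hw i j).mul (continuous_symGrad hv i j)

lemma symGradInner_comm (w v : (Fin 3 → ℝ) → (Fin 3 → ℝ)) (y : Fin 3 → ℝ) :
    symGradInner w v y = symGradInner v w y := by
  simp only [symGradInner, mul_comm]

lemma symGradInner_self (w : (Fin 3 → ℝ) → (Fin 3 → ℝ)) (y : Fin 3 → ℝ) :
    symGradInner w w y = symGradNormSq w y := by
  simp only [symGradInner, symGradNormSq, sq]

lemma symGradNormSq_nonneg (w : (Fin 3 → ℝ) → (Fin 3 → ℝ)) (y : Fin 3 → ℝ) :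
    0 ≤ symGradNormSq w y :=
  Finset.sum_nonneg fun _ _ => Finset.sum_nonneg fun _ _ => sq_nonneg _

lemma symGradInner_eq_zero_of_symGradNormSq_eq_zero {w : (Fin 3 → ℝ) → (Fin 3 → ℝ)}
    {y : Fin 3 → ℝ} (h : symGradNormSq w y = 0) (v : (Fin 3 → ℝ) → (Fin 3 → ℝ)) :
    symGradInner w v y = 0 := by
  have hz : ∀ i j, symGrad w y i j = 0 := fun i j => by
    have hi := (Finset.sum_eq_zero_iff_of_nonneg fun _ _ => Finset.sum_nonneg fun _ _ =>
      sq_nonneg _).1 h i (Finset.mem_univ _)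
    exact pow_eq_zero_iff two_ne_zero |>.1 <|
      (Finset.sum_eq_zero_iff_of_nonneg fun _ _ => sq_nonneg _).1 hi j (Finset.mem_univ _)
  simp [symGradInner, hz]

section Superposition

variable {ι : Type*} [Fintype ι] {W : ι → (Fin 3 → ℝ) → (Fin 3 → ℝ)}

lemma symGrad_sum_smul {y : Fin 3 → ℝ} (hW : ∀ i, DifferentiableAt ℝ (W i) y) (ξ : ι → ℝ)
    (m n : Fin 3) :
    symGrad (fun y => ∑ i, ξ i • W i y) y m n = ∑ i, ξ i * symGrad (W i) y m n := by
  have hD : fderiv ℝ (fun y => ∑ i, ξ i • W i y) y = ∑ i, ξ i • fderiv ℝ (W i) y :=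
    (HasFDerivAt.fun_sum fun i _ => (hW i).hasFDerivAt.const_smul (ξ i)).fderiv
  simp only [symGrad, hD, FunLike.coe_sum, FunLike.coe_smul,
    Finset.sum_apply, Pi.smul_apply, smul_eq_mul, ← Finset.sum_add_distrib, Finset.sum_div]
  exact Finset.sum_congr rfl fun _ _ => by ring

lemma symGradInner_sum_smul_left {y : Fin 3 → ℝ} (hW : ∀ i, DifferentiableAt ℝ (W i) y)
    (ξ : ι → ℝ) (v : (Fin 3 → ℝ) → (Fin 3 → ℝ)) :
    symGradInner (fun y => ∑ i, ξ i • W i y) v y = ∑ i, ξ i * symGradInner (W i) v y := by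
  simp only [symGradInner, symGrad_sum_smul hW, Finset.sum_mul, Finset.mul_sum, mul_assoc]
  calc _ = ∑ m, ∑ i, ∑ n, ξ i * (symGrad (W i) y m n * symGrad v y m n) :=
        Finset.sum_congr rfl fun _ _ => Finset.sum_comm
    _ = _ := Finset.sum_comm

lemma symGradNormSq_sum_smul {y : Fin 3 → ℝ} (hW : ∀ i, DifferentiableAt ℝ (W i) y)
    (ξ : ι → ℝ) :
    symGradNormSq (fun y => ∑ i, ξ i • W i y) y =
      ∑ i, ∑ j, ξ i * ξ j * symGradInner (W i) (W j) y := by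
  calc symGradNormSq (fun y => ∑ i, ξ i • W i y) y
      = ∑ i, ξ i * symGradInner (fun y => ∑ j, ξ j • W j y) (W i) y := by
        rw [← symGradInner_self, symGradInner_sum_smul_left hW]
        exact Finset.sum_congr rfl fun i _ => by rw [symGradInner_comm]
    _ = ∑ i, ∑ j, ξ i * ξ j * symGradInner (W i) (W j) y := by
        refine Finset.sum_congr rfl fun i _ => ?_
        rw [symGradInner_sum_smul_left hW, Finset.mul_sum]
        refine Finset.sum_congr rfl fun j _ => ?_
        rw [symGradInner_comm]
        ring

lemma integral_symGradNormSq_sum_smul (hW : ∀ i, ContDiff ℝ 1 (W i)) (ξ : ι → ℝ) (r : ℝ) :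
    ∫ y in Yf r, symGradNormSq (fun y => ∑ i, ξ i • W i y) y =
      ∑ i, ∑ j, ξ i * ξ j * ∫ y in Yf r, symGradInner (W i) (W j) y := by
  have hint : ∀ i j, IntegrableOn (fun y => ξ i * ξ j * symGradInner (W i) (W j) y) (Yf r) :=
    fun i j => (continuous_const.mul (continuous_symGradInner (hW i) (hW j))).integrableOn_Yf r
  calc ∫ y in Yf r, symGradNormSq (fun y => ∑ i, ξ i • W i y) y
      = ∫ y in Yf r, ∑ i, ∑ j, ξ i * ξ j * symGradInner (W i) (W j) y :=
        integral_congr_ae <| .of_forall fun y =>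
          symGradNormSq_sum_smul (fun i => (hW i).differentiable one_ne_zero y) ξ
    _ = _ := by
        rw [integral_finsetSum _ fun i _ => integrable_finsetSum _ fun j _ => hint i j]
        simp only [integral_finsetSum _ fun j _ => hint _ j, integral_const_mul]

end Superposition

section CellProblem

def IsCellSolution (r μ₁ : ℝ) (w : (Fin 3 → ℝ) → (Fin 3 → ℝ)) (i : Fin 3) : Prop :=
  CellAdmissible r w ∧ ∀ φ, CellAdmissible r φ →
    μ₁ * ∫ y in Yf r, symGradInner w φ y = ∫ y in Yf r, φ y i

variable {r μ₁ : ℝ} {W : Fin 3 → (Fin 3 → ℝ) → (Fin 3 → ℝ)}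

lemma setIntegral_cell_apply_eq_symGradInner (hW : ∀ i, IsCellSolution r μ₁ (W i) i)
    (i j : Fin 3) :
    ∫ y in Yf r, W i y j = μ₁ * ∫ y in Yf r, symGradInner (W i) (W j) y := by
  simp only [← (hW j).2 (W i) (hW i).1, symGradInner_comm (W j) (W i)]

lemma sum_setIntegral_cell_mul_mul_eq_symGradNormSq (hW : ∀ i, IsCellSolution r μ₁ (W i) i)
    (ξ : Fin 3 → ℝ) :
    ∑ i, ∑ j, (∫ y in Yf r, W i y j) * ξ i * ξ j =
      μ₁ * ∫ y in Yf r, symGradNormSq (fun y => ∑ i, ξ i • W i y) y := by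
  simp only [integral_symGradNormSq_sum_smul (fun i => (hW i).1.1), Finset.mul_sum,
    setIntegral_cell_apply_eq_symGradInner hW]
  exact Finset.sum_congr rfl fun _ _ => Finset.sum_congr rfl fun _ _ => by ring

lemma mul_setIntegral_symGradInner_sum_smul (hW : ∀ i, IsCellSolution r μ₁ (W i) i)
    (ξ : Fin 3 → ℝ) {φ : (Fin 3 → ℝ) → (Fin 3 → ℝ)} (hφ : CellAdmissible r φ) :
    μ₁ * ∫ y in Yf r, symGradInner (fun y => ∑ i, ξ i • W i y) φ y =
      ∑ i, ξ i * ∫ y in Yf r, φ y i := by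
  have hint : ∀ i, IntegrableOn (fun y => ξ i * symGradInner (W i) φ y) (Yf r) := fun i =>
    (continuous_const.mul (continuous_symGradInner (hW i).1.1 hφ.1)).integrableOn_Yf r
  rw [integral_congr_ae <| .of_forall fun y =>
      symGradInner_sum_smul_left (fun i => (hW i).1.1.differentiable one_ne_zero y) ξ φ,
    integral_finsetSum _ fun i _ => hint i, Finset.mul_sum]
  simp only [integral_const_mul, mul_left_comm μ₁, (hW _).2 φ hφ]

lemma eq_zero_of_setIntegral_symGradNormSq_eq_zero (hr : 0 < r) (hr' : r < 1 / 2)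
    (hW : ∀ i, IsCellSolution r μ₁ (W i) i) {ξ : Fin 3 → ℝ}
    (h : ∫ y in Yf r, symGradNormSq (fun y => ∑ i, ξ i • W i y) y = 0) : ξ = 0 := by
  have hWξ : ContDiff ℝ 1 fun y => ∑ i, ξ i • W i y :=
    ContDiff.sum fun i _ => (hW i).1.1.const_smul (ξ i)
  have hD : symGradNormSq (fun y => ∑ i, ξ i • W i y) =ᵐ[volume.restrict (Yf r)] 0 :=
    (setIntegral_eq_zero_iff_of_nonneg_ae (.of_forall (symGradNormSq_nonneg _))
      (((continuous_symGradInner hWξ hWξ).congr (symGradInner_self _)).integrableOn_Yf r)).1 h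
  funext k
  obtain ⟨φ, hφ, hφ_ne, hφ_pos⟩ := exists_cellAdmissible_setIntegral_pos hr hr' k
  have horth : ∫ y in Yf r, symGradInner (fun y => ∑ i, ξ i • W i y) φ y = 0 :=
    integral_eq_zero_of_ae <| hD.mono fun y hy =>
      symGradInner_eq_zero_of_symGradNormSq_eq_zero hy φ
  have hsum := mul_setIntegral_symGradInner_sum_smul hW ξ hφ
  rw [horth, mul_zero, Finset.sum_eq_single k (fun i _ hik => by simp [hφ_ne _ i hik])
    (by simp)] at hsum
  exact (mul_eq_zero.1 hsum.symm).resolve_right hφ_pos.ne'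

end CellProblem

/-- Strict positive definiteness of the permeability matrix B^{(w)}: with
b_{ij} = ∫_{Y_f} W^{(i)}·e^j dy one has ∑ b_{ij} ξ_i ξ_j = μ₁ ∫ |D(y,W(ξ))|² dy ≥ 0 for
W(ξ) = ∑ ξ_i W^{(i)}, and ∑ b_{ij} ξ_i ξ_j > 0 for ξ ≠ 0. -/
theorem stmt_6 (r μ₁ : ℝ) (hr : 0 < r) (hr' : r < 1 / 2) (hμ : 0 < μ₁)
    (W : Fin 3 → (Fin 3 → ℝ) → (Fin 3 → ℝ))
    (hadm : ∀ i, CellAdmissible r (W i))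
    (hweak : ∀ i, ∀ φ, CellAdmissible r φ →
      μ₁ * ∫ y in Yf r, symGradInner (W i) φ y = ∫ y in Yf r, φ y i) :
    (∀ ξ : Fin 3 → ℝ,
      ∑ i, ∑ j, (∫ y in Yf r, W i y j) * ξ i * ξ j =
        μ₁ * ∫ y in Yf r, symGradNormSq (fun y => ∑ i, ξ i • W i y) y) ∧
    (∀ ξ : Fin 3 → ℝ, 0 ≤ ∑ i, ∑ j, (∫ y in Yf r, W i y j) * ξ i * ξ j) ∧
    (∀ ξ : Fin 3 → ℝ, ξ ≠ 0 → 0 < ∑ i, ∑ j, (∫ y in Yf r, W i y j) * ξ i * ξ j) := by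
  have hW : ∀ i, IsCellSolution r μ₁ (W i) i := fun i => ⟨hadm i, hweak i⟩
  have hquad := sum_setIntegral_cell_mul_mul_eq_symGradNormSq hW
  have hint_nonneg : ∀ ξ : Fin 3 → ℝ,
      0 ≤ ∫ y in Yf r, symGradNormSq (fun y => ∑ i, ξ i • W i y) y := fun ξ =>
    setIntegral_nonneg (isOpen_Yf r).measurableSet fun y _ => symGradNormSq_nonneg _ y
  refine ⟨hquad, fun ξ => hquad ξ ▸ mul_nonneg hμ.le (hint_nonneg ξ), fun ξ hξ => ?_⟩
  rw [hquad ξ]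
  exact mul_pos hμ <| (hint_nonneg ξ).lt_of_ne' fun h =>
    hξ (eq_zero_of_setIntegral_symGradNormSq_eq_zero hr hr' hW h)

end
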